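/- Let A be a symmetric positive definite n×n real matrix and b ∈ ℝⁿ. Let R₁ ∈ ℝ^{m₁×n} and R₂ ∈ ℝ^{m₂×n} be restriction matrices whose rows are distinct standard basis vectors of ℝⁿ, with index sets Q₁ ⊆ Q₂ ⊆ {1,…,n} (so every row of R₁ is also a row of R₂). If x₁ and x₂ are the respective solutions of (R₁ A R₁ᵀ) x₁ = R₁ b and (R₂ A R₂ᵀ) x₂ = R₂ b, then ‖A⁻¹b − R₂ᵀx₂‖_A ≤ ‖A⁻¹b − R₁ᵀx₁‖_A; i.e., enlarging the selected index pattern cannot increase the optimal energy-norm error. -/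
import Mathlib

open Matrix

/-- Enlarging the selected index pattern cannot increase the optimal
energy-norm error of the restricted solution. -/
theorem enlarging_pattern_decreases_error
    {n m₁ m₂ : ℕ} (A : Matrix (Fin n) (Fin n) ℝ) (hA : A.PosDef)
    (b : Fin n → ℝ)
    (σ₁ : Fin m₁ → Fin n) (hσ₁ : Function.Injective σ₁)
    (σ₂ : Fin m₂ → Fin n) (hσ₂ : Function.Injective σ₂)
    (hsub : Set.range σ₁ ⊆ Set.range σ₂)
    (R₁ : Matrix (Fin m₁) (Fin n) ℝ)
    (hR₁ : R₁ = Matrix.of fun i j => if σ₁ i = j then (1 : ℝ) else 0)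
    (R₂ : Matrix (Fin m₂) (Fin n) ℝ)
    (hR₂ : R₂ = Matrix.of fun i j => if σ₂ i = j then (1 : ℝ) else 0)
    (x₁ : Fin m₁ → ℝ) (hx₁ : (R₁ * A * R₁ᵀ) *ᵥ x₁ = R₁ *ᵥ b)
    (x₂ : Fin m₂ → ℝ) (hx₂ : (R₂ * A * R₂ᵀ) *ᵥ x₂ = R₂ *ᵥ b) :
    Real.sqrt ((A⁻¹ *ᵥ b - R₂ᵀ *ᵥ x₂) ⬝ᵥ (A *ᵥ (A⁻¹ *ᵥ b - R₂ᵀ *ᵥ x₂))) ≤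
      Real.sqrt ((A⁻¹ *ᵥ b - R₁ᵀ *ᵥ x₁) ⬝ᵥ (A *ᵥ (A⁻¹ *ᵥ b - R₁ᵀ *ᵥ x₁))) := by
  classical
  have hsym : Aᵀ = A := hA.isHermitian
  have hdet : IsUnit A.det := isUnit_iff_ne_zero.2 (ne_of_gt hA.det_pos)
  have hAe : A *ᵥ (A⁻¹ *ᵥ b) = b := by
    rw [Matrix.mulVec_mulVec, Matrix.mul_nonsing_inv _ hdet, Matrix.one_mulVec]
  set e := A⁻¹ *ᵥ b with he
  set p := R₂ᵀ *ᵥ x₂ with hp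
  set w := R₁ᵀ *ᵥ x₁ with hw
  -- symmetry of the bilinear form
  have hswap : ∀ x y : Fin n → ℝ, x ⬝ᵥ (A *ᵥ y) = (A *ᵥ x) ⬝ᵥ y := by
    intro x y
    rw [Matrix.dotProduct_mulVec, ← Matrix.mulVec_transpose, hsym]
  -- w is in the range of R₂ᵀ
  set z : Fin m₂ → ℝ := fun j => ∑ i, if σ₂ j = σ₁ i then x₁ i else 0 with hz
  have hPw : R₂ᵀ *ᵥ z = w := by
    funext k
    have lhs : (R₂ᵀ *ᵥ z) k = ∑ j, (if σ₂ j = k then (1:ℝ) else 0) * z j := by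
      simp [Matrix.mulVec, dotProduct, hR₂, Matrix.transpose_apply]
    have rhs : w k = ∑ i, (if σ₁ i = k then (1:ℝ) else 0) * x₁ i := by
      simp [hw, Matrix.mulVec, dotProduct, hR₁, Matrix.transpose_apply]
    rw [lhs, rhs]
    by_cases hk : ∃ j, σ₂ j = k
    · obtain ⟨j₀, hj₀⟩ := hk
      have hiff : ∀ j, (σ₂ j = k) ↔ (j = j₀) := fun j =>
        ⟨fun h => hσ₂ (h.trans hj₀.symm), fun h => h ▸ hj₀⟩
      calc ∑ j, (if σ₂ j = k then (1:ℝ) else 0) * z j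
          = ∑ j, (if j = j₀ then (1:ℝ) else 0) * z j := by
            refine Finset.sum_congr rfl fun j _ => ?_
            rw [show (if σ₂ j = k then (1:ℝ) else 0) = (if j = j₀ then (1:ℝ) else 0) by
              simp [hiff j]]
        _ = z j₀ := by simp
        _ = ∑ i, (if σ₁ i = k then (1:ℝ) else 0) * x₁ i := by
            rw [hz]
            refine Finset.sum_congr rfl fun i _ => ?_
            by_cases h : σ₁ i = k
            · simp [h, hj₀]
            · have : σ₂ j₀ ≠ σ₁ i := by rw [hj₀]; exact fun hc => h hc.symm
              simp [h, this]
    · have h1 : ∀ j, σ₂ j ≠ k := fun j hc => hk ⟨j, hc⟩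
      have h2 : ∀ i, σ₁ i ≠ k := fun i hc => by
        obtain ⟨j, hj⟩ := hsub ⟨i, hc⟩
        exact hk ⟨j, hj⟩
      simp [h1, h2]
  -- Galerkin orthogonality
  have hg : R₂ *ᵥ (A *ᵥ (e - p)) = 0 := by
    rw [Matrix.mulVec_sub, hAe, hp, Matrix.mulVec_mulVec, Matrix.mulVec_sub,
      Matrix.mulVec_mulVec, ← Matrix.mul_assoc, hx₂]
    simp
  have hcross : (e - p) ⬝ᵥ (A *ᵥ (p - w)) = 0 := by
    have hpw : p - w = R₂ᵀ *ᵥ (x₂ - z) := by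
      rw [Matrix.mulVec_sub, hPw, hp]
    rw [hswap, hpw, Matrix.dotProduct_mulVec, Matrix.vecMul_transpose, hg,
      zero_dotProduct]
  -- nonnegativity
  have hnn : 0 ≤ (p - w) ⬝ᵥ (A *ᵥ (p - w)) := by
    have := hA.posSemidef.dotProduct_mulVec_nonneg (p - w)
    simpa using this
  -- expand the quadratic
  have hexp : (e - w) ⬝ᵥ (A *ᵥ (e - w)) =
      (e - p) ⬝ᵥ (A *ᵥ (e - p)) + 2 * ((e - p) ⬝ᵥ (A *ᵥ (p - w)))
        + (p - w) ⬝ᵥ (A *ᵥ (p - w)) := by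
    have h1 : e - w = (e - p) + (p - w) := by abel
    rw [h1, Matrix.mulVec_add, add_dotProduct, dotProduct_add,
      dotProduct_add]
    have h2 : (p - w) ⬝ᵥ (A *ᵥ (e - p)) = (e - p) ⬝ᵥ (A *ᵥ (p - w)) := by
      rw [hswap, dotProduct_comm]
    rw [h2]; ring
  have hle : (e - p) ⬝ᵥ (A *ᵥ (e - p)) ≤ (e - w) ⬝ᵥ (A *ᵥ (e - w)) := by
    rw [hexp, hcross]; linarith
  exact Real.sqrt_le_sqrt hle
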